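/- For r,s ≥ 3 both odd, the torus C_r □ C_s contains no 3-antiresolving set; i.e., adim_3(C_r □ C_s) = +∞. -/

import Mathlib

/-!
Write `r = 2m + 1` and `s = 2k + 1`. Distances in `C_r □ C_s` add over the coordinates, so the
vertices farthest from `z` are the four points `z + (±m, ±k)`.

If `S = {z}`, the point reflection `y ↦ 2z - y` preserves the distance to `z` and fixes only `z`
(since `r`, `s` are odd), so it pairs off the points of every class: no class has size 3.

If `S` contains `z ≠ z'`, three distinct antipodes of `z` are never equidistant from `z'`: two of
them share a coordinate and differ in the other by `m` versus `-m`, and in an odd cycle the only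
vertex equidistant from the two antipodes of a vertex is that vertex. An antipode of `z` outside `S`
would have a class of at least three such points, so all antipodes of points of `S` lie in `S`.
Adding `(m, k)` and then `(m, -k)` (resp. `(-m, k)`) shows `S - (1, 0) ⊆ S` and `S - (0, 1) ⊆ S`,
hence `S` is everything, although its complement must be nonempty.
-/

open SimpleGraph

/-- Two vertices have the same distances to every vertex of `S`. -/
def sameDists {V : Type*} (G : SimpleGraph V) (S : Set V) (x y : V) : Prop :=
  ∀ z ∈ S, G.dist x z = G.dist y z

/-- The equivalence class (outside `S`) of `x` under the equal-distance relation `R_S`. -/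
def cls {V : Type*} (G : SimpleGraph V) (S : Set V) (x : V) : Set V :=
  {y | y ∉ S ∧ sameDists G S x y}

/-- `S` is a `k`-antiresolving set: `S` is nonempty, does not cover `V`, and the minimum
size of an equivalence class of `R_S` on `V ∖ S` equals `k`. -/
def IsKARS {V : Type*} (G : SimpleGraph V) (k : ℕ) (S : Set V) : Prop :=
  S.Nonempty ∧ Sᶜ.Nonempty ∧
    (∀ x ∉ S, k ≤ (cls G S x).ncard) ∧ ∃ x ∉ S, (cls G S x).ncard = k

/-- The `k`-metric antidimension: the smallest cardinality of a `k`-antiresolving set,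
`⊤` (i.e. `+∞`) if none exists. -/
noncomputable def adim {V : Type*} (G : SimpleGraph V) (k : ℕ) : ℕ∞ :=
  sInf ((fun S => (S.ncard : ℕ∞)) '' {S : Set V | IsKARS G k S})

open Fin.NatCast Fin.CommRing

namespace Fin

def circNorm {n : ℕ} (t : Fin n) : ℕ := min t.val (-t).val

variable {n m : ℕ}

lemma circNorm_neg (t : Fin n) : (-t).circNorm = t.circNorm := by
  simp [circNorm, min_comm]

lemma circNorm_eq [NeZero n] (t : Fin n) : t.circNorm = min t.val (n - t.val) := by
  rw [circNorm, val_neg]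
  split_ifs with h <;> simp [h]

lemma circNorm_add_one_le (t : Fin (n + 1)) : (t + 1).circNorm ≤ t.circNorm + 1 := by
  rw [circNorm_eq, circNorm_eq, val_add_one]
  split_ifs with h
  · simp
  · omega

lemma circNorm_sub_one_le (t : Fin (n + 1)) : (t - 1).circNorm ≤ t.circNorm + 1 := by
  have := circNorm_add_one_le (-t)
  rwa [neg_add_eq_sub, ← neg_sub, circNorm_neg, circNorm_neg] at this

lemma forall_of_imp_sub_one [NeZero n] {P : Fin n → Prop} (h : ∀ a, P a → P (a - 1)) {a : Fin n}
    (ha : P a) (b : Fin n) : P b := by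
  have hk : ∀ k : ℕ, P (a - k) := by
    intro k
    induction k with
    | zero => simpa using ha
    | succ k ih => simpa [sub_sub] using h _ ih
  simpa using hk (a - b).val

lemma val_natCast_half : ((m : Fin (2 * m + 1)) : ℕ) = m := by
  rw [val_natCast]
  exact Nat.mod_eq_of_lt (show m < 2 * m + 1 by omega)

lemma natCast_half_add_self : (m : Fin (2 * m + 1)) + m = -1 := by
  ext
  rw [val_add, val_natCast_half, coe_neg_one]
  rw [Nat.mod_eq_of_lt (by omega)]
  omega

lemma circNorm_le_half (t : Fin (2 * m + 1)) : t.circNorm ≤ m := by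
  have := t.isLt
  rw [circNorm_eq]
  omega

lemma circNorm_eq_half_iff (t : Fin (2 * m + 1)) : t.circNorm = m ↔ t = m ∨ t = -m := by
  have hneg : m ≤ (-(m : Fin (2 * m + 1))).val := by
    rw [val_neg]
    split_ifs with h
    · have := congrArg Fin.val h
      rw [val_natCast_half, val_zero] at this
      exact this.le
    · rw [val_natCast_half]
      omega
  constructor
  · intro h
    rcases le_total t.val (-t).val with hle | hle
    · rw [circNorm, min_eq_left hle] at h
      exact .inl (Fin.ext (by rw [h, val_natCast_half]))
    · rw [circNorm, min_eq_right hle] at h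
      exact .inr (neg_eq_iff_eq_neg.1 (Fin.ext (by rw [h, val_natCast_half])))
  · rintro (rfl | rfl)
    · rw [circNorm, val_natCast_half, min_eq_left hneg]
    · rw [circNorm_neg, circNorm, val_natCast_half, min_eq_left hneg]

lemma eq_natCast_half_of_circNorm_add_one (x : Fin (2 * m + 1))
    (h : (x + 1).circNorm = x.circNorm) : x = m := by
  have hx := x.isLt
  rw [circNorm_eq, circNorm_eq, val_add_one] at h
  ext
  rw [val_natCast_half]
  split_ifs at h with hlast
  · rw [hlast, val_last] at h ⊢
    omega
  · omega

lemma eq_zero_of_circNorm_add_half_eq (t : Fin (2 * m + 1))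
    (h : (t + m).circNorm = (t - m).circNorm) : t = 0 := by
  have hsub : t - m = t + m + 1 := by linear_combination -natCast_half_add_self (m := m)
  rw [hsub] at h
  simpa using eq_natCast_half_of_circNorm_add_one _ h.symm

lemma eq_zero_of_add_self_eq_zero {a : Fin (2 * m + 1)} (h : a + a = 0) : a = 0 := by
  linear_combination (-(m : Fin (2 * m + 1))) * h + a * natCast_half_add_self (m := m)

lemma eq_of_circNorm_sub_antipodes_eq {a b c c' : Fin (2 * m + 1)}
    (ha : a - c = m ∨ a - c = -m) (hb : b - c = m ∨ b - c = -m) (hab : a ≠ b)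
    (h : (a - c').circNorm = (b - c').circNorm) : c = c' := by
  have key : ∀ {a b : Fin (2 * m + 1)}, a - c = m → b - c = -m →
      (a - c').circNorm = (b - c').circNorm → c = c' := by
    intro a b ha hb h
    rw [sub_eq_iff_eq_add'] at ha hb
    subst ha hb
    refine sub_eq_zero.1 (eq_zero_of_circNorm_add_half_eq _ ?_)
    convert h using 2 <;> abel
  rcases ha with ha | ha <;> rcases hb with hb | hb
  · exact absurd (sub_left_inj.1 (ha.trans hb.symm)) hab
  · exact key ha hb h
  · exact key hb ha h.symm
  · exact absurd (sub_left_inj.1 (ha.trans hb.symm)) hab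

end Fin

namespace SimpleGraph

variable {V α β : Type*} {G : SimpleGraph V}

lemma Walk.le_add_length {f : V → ℕ} (hf : ∀ ⦃a b⦄, G.Adj a b → f a ≤ f b + 1) {u v : V}
    (p : G.Walk u v) : f u ≤ f v + p.length := by
  induction p with
  | nil => simp
  | cons hadj _ ih =>
    rw [Walk.length_cons]
    have := hf hadj
    omega

lemma dist_boxProd {G : SimpleGraph α} {H : SimpleGraph β} {x y : α × β}
    (h₁ : G.Reachable x.1 y.1) (h₂ : H.Reachable x.2 y.2) :
    (G □ H).dist x y = G.dist x.1 y.1 + H.dist x.2 y.2 := by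
  have h : (G □ H).Reachable x y := reachable_boxProd.2 ⟨h₁, h₂⟩
  rw [← Nat.cast_inj (R := ℕ∞), Nat.cast_add, h.coe_dist_eq_edist, h₁.coe_dist_eq_edist,
    h₂.coe_dist_eq_edist, edist_boxProd]

lemma sub_eq_one_or_sub_eq_one_of_cycleGraph_adj {n : ℕ} {u v : Fin (n + 1)}
    (h : (cycleGraph (n + 1)).Adj u v) : u - v = 1 ∨ v - u = 1 := by
  rw [cycleGraph_eq_circulantGraph, circulantGraph, fromRel_adj] at h
  simpa using h.2

lemma cycleGraph_dist_add_one_le {n : ℕ} (u : Fin (n + 1)) :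
    (cycleGraph (n + 1)).dist u (u + 1) ≤ 1 := by
  by_cases h : u = u + 1
  · rw [← h, dist_self]
    exact zero_le_one
  · refine (dist_eq_one_iff_adj.2 ?_).le
    rw [cycleGraph_eq_circulantGraph, circulantGraph, fromRel_adj]
    simp [h]

lemma cycleGraph_dist_add_natCast_le {n : ℕ} (u : Fin (n + 1)) (k : ℕ) :
    (cycleGraph (n + 1)).dist u (u + k) ≤ k := by
  induction k with
  | zero => simp
  | succ k ih =>
    calc (cycleGraph (n + 1)).dist u (u + (k + 1 : ℕ))
        ≤ (cycleGraph (n + 1)).dist u (u + k) +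
            (cycleGraph (n + 1)).dist (u + k) (u + k + 1) := by
          rw [Nat.cast_succ, ← add_assoc]
          exact cycleGraph_connected.dist_triangle
      _ ≤ k + 1 := add_le_add ih (cycleGraph_dist_add_one_le _)

lemma cycleGraph_dist {n : ℕ} (u v : Fin (n + 1)) :
    (cycleGraph (n + 1)).dist u v = (u - v).circNorm := by
  apply le_antisymm
  · have h₁ := cycleGraph_dist_add_natCast_le u (v - u).val
    have h₂ := cycleGraph_dist_add_natCast_le v (u - v).val
    rw [Fin.cast_val_eq_self, add_sub_cancel] at h₁ h₂
    rw [Fin.circNorm, neg_sub, dist_comm]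
    exact le_min h₂ (dist_comm (G := cycleGraph (n + 1)) ▸ h₁)
  · obtain ⟨p, hp⟩ := cycleGraph_connected.exists_walk_length_eq_dist u v
    have hstep : ∀ ⦃a b : Fin (n + 1)⦄, (cycleGraph (n + 1)).Adj a b →
        (a - v).circNorm ≤ (b - v).circNorm + 1 := by
      intro a b hab
      rcases sub_eq_one_or_sub_eq_one_of_cycleGraph_adj hab with h | h
      · rw [show a - v = b - v + 1 by rw [← h]; abel]
        exact Fin.circNorm_add_one_le _
      · rw [show a - v = b - v - 1 by rw [← h]; abel]
        exact Fin.circNorm_sub_one_le _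
    simpa [← hp, Fin.circNorm] using p.le_add_length hstep

end SimpleGraph

lemma eq_or_eq_or_eq_of_eq_or_eq {α : Type*} {p q a b c : α} (ha : a = p ∨ a = q)
    (hb : b = p ∨ b = q) (hc : c = p ∨ c = q) : a = b ∨ a = c ∨ b = c := by
  rcases ha with rfl | rfl <;> rcases hb with rfl | rfl <;> rcases hc with rfl | rfl <;> simp

lemma Set.even_ncard_of_involutive {α : Type*} {s : Set α} (hs : s.Finite) (σ : α → α)
    (hσ : Function.Involutive σ) (hmaps : ∀ a ∈ s, σ a ∈ s) (hfree : ∀ a ∈ s, σ a ≠ a) :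
    Even s.ncard := by
  rw [← ZMod.natCast_eq_zero_iff_even, Set.ncard_eq_toFinset_card s hs, Finset.card_eq_sum_ones,
    Nat.cast_sum, Nat.cast_one]
  refine Finset.sum_involution (fun a _ => σ a) (fun _ _ => by decide)
    (fun a ha _ => hfree a (by simpa using ha))
    (fun a ha => by simpa using hmaps a (by simpa using ha)) (fun a _ => hσ a)

lemma even_ncard_cls_singleton {V : Type*} [Finite V] {G : SimpleGraph V} {z : V} (σ : V → V)
    (hσ : Function.Involutive σ) (hfix : ∀ y, σ y = y ↔ y = z)
    (hdist : ∀ y, G.dist (σ y) z = G.dist y z) (x : V) :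
    Even (cls G {z} x).ncard := by
  refine Set.even_ncard_of_involutive (Set.toFinite _) σ hσ ?_ ?_
  · rintro y ⟨hyz, hy⟩
    refine ⟨fun h => hyz ?_, ?_⟩
    · rw [Set.mem_singleton_iff] at h ⊢
      rw [← hσ y, h, (hfix z).2 rfl]
    · rintro _ rfl
      rw [hdist]
      exact hy _ rfl
  · rintro y ⟨hyz, -⟩ h
    exact hyz ((hfix y).1 h)

abbrev torus (m k : ℕ) : SimpleGraph (Fin (2 * m + 1) × Fin (2 * k + 1)) :=
  cycleGraph (2 * m + 1) □ cycleGraph (2 * k + 1)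

section Torus

variable {m k : ℕ}

lemma torus_dist (x y : Fin (2 * m + 1) × Fin (2 * k + 1)) :
    (torus m k).dist x y = (x.1 - y.1).circNorm + (x.2 - y.2).circNorm := by
  rw [torus, dist_boxProd (cycleGraph_preconnected _ _) (cycleGraph_preconnected _ _),
    cycleGraph_dist, cycleGraph_dist]

lemma torus_dist_eq_iff (y z : Fin (2 * m + 1) × Fin (2 * k + 1)) :
    (torus m k).dist y z = m + k ↔
      (y.1 - z.1 = m ∨ y.1 - z.1 = -m) ∧ (y.2 - z.2 = k ∨ y.2 - z.2 = -k) := by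
  rw [torus_dist, ← Fin.circNorm_eq_half_iff, ← Fin.circNorm_eq_half_iff]
  have := Fin.circNorm_le_half (y.1 - z.1)
  have := Fin.circNorm_le_half (y.2 - z.2)
  omega

lemma even_ncard_torus_cls_singleton (z x : Fin (2 * m + 1) × Fin (2 * k + 1)) :
    Even (cls (torus m k) {z} x).ncard := by
  refine even_ncard_cls_singleton (fun y => z + z - y) (fun y => sub_sub_cancel _ _)
    (fun y => ⟨fun h => ?_, fun h => by rw [h, add_sub_cancel_right]⟩) (fun y => ?_) x
  · obtain ⟨h₁, h₂⟩ := Prod.ext_iff.1 h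
    simp only [Prod.fst_sub, Prod.snd_sub, Prod.fst_add, Prod.snd_add] at h₁ h₂
    replace h₁ : y.1 - z.1 + (y.1 - z.1) = 0 := by linear_combination -h₁
    replace h₂ : y.2 - z.2 + (y.2 - z.2) = 0 := by linear_combination -h₂
    exact Prod.ext (sub_eq_zero.1 (Fin.eq_zero_of_add_self_eq_zero h₁))
      (sub_eq_zero.1 (Fin.eq_zero_of_add_self_eq_zero h₂))
  · rw [torus_dist, torus_dist, ← Fin.circNorm_neg (y.1 - z.1), ← Fin.circNorm_neg (y.2 - z.2)]
    congr 2 <;> simp only [Prod.fst_sub, Prod.snd_sub, Prod.fst_add, Prod.snd_add] <;> abel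

lemma torus_snd_eq_of_fst_eq {y y' z z' : Fin (2 * m + 1) × Fin (2 * k + 1)}
    (hy : (torus m k).dist y z = m + k) (hy' : (torus m k).dist y' z = m + k) (hne : y ≠ y')
    (hfst : y.1 = y'.1) (hd : (torus m k).dist y z' = (torus m k).dist y' z') : z.2 = z'.2 := by
  rw [torus_dist_eq_iff] at hy hy'
  rw [torus_dist, torus_dist, hfst, Nat.add_left_cancel_iff] at hd
  exact Fin.eq_of_circNorm_sub_antipodes_eq hy.2 hy'.2 (fun h => hne (Prod.ext hfst h)) hd

lemma torus_fst_eq_of_snd_eq {y y' z z' : Fin (2 * m + 1) × Fin (2 * k + 1)}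
    (hy : (torus m k).dist y z = m + k) (hy' : (torus m k).dist y' z = m + k) (hne : y ≠ y')
    (hsnd : y.2 = y'.2) (hd : (torus m k).dist y z' = (torus m k).dist y' z') : z.1 = z'.1 := by
  rw [torus_dist_eq_iff] at hy hy'
  rw [torus_dist, torus_dist, hsnd, Nat.add_right_cancel_iff] at hd
  exact Fin.eq_of_circNorm_sub_antipodes_eq hy.1 hy'.1 (fun h => hne (Prod.ext h hsnd)) hd

lemma torus_eq_of_three_antipodes {a b c z z' : Fin (2 * m + 1) × Fin (2 * k + 1)}
    (ha : (torus m k).dist a z = m + k) (hb : (torus m k).dist b z = m + k)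
    (hc : (torus m k).dist c z = m + k) (hab : a ≠ b) (hac : a ≠ c) (hbc : b ≠ c)
    (hb' : (torus m k).dist a z' = (torus m k).dist b z')
    (hc' : (torus m k).dist a z' = (torus m k).dist c z') : z = z' := by
  obtain ⟨ha₁, ha₂⟩ := (torus_dist_eq_iff a z).1 ha
  obtain ⟨hb₁, hb₂⟩ := (torus_dist_eq_iff b z).1 hb
  obtain ⟨hc₁, hc₂⟩ := (torus_dist_eq_iff c z).1 hc
  refine Prod.ext ?_ ?_
  · rcases eq_or_eq_or_eq_of_eq_or_eq ha₂ hb₂ hc₂ with h | h | h <;> replace h := sub_left_inj.1 h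
    · exact torus_fst_eq_of_snd_eq ha hb hab h hb'
    · exact torus_fst_eq_of_snd_eq ha hc hac h hc'
    · exact torus_fst_eq_of_snd_eq hb hc hbc h (hb'.symm.trans hc')
  · rcases eq_or_eq_or_eq_of_eq_or_eq ha₁ hb₁ hc₁ with h | h | h <;> replace h := sub_left_inj.1 h
    · exact torus_snd_eq_of_fst_eq ha hb hab h hb'
    · exact torus_snd_eq_of_fst_eq ha hc hac h hc'
    · exact torus_snd_eq_of_fst_eq hb hc hbc h (hb'.symm.trans hc')

lemma torus_mem_of_dist_eq {S : Set (Fin (2 * m + 1) × Fin (2 * k + 1))} (hS : S.Nontrivial)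
    (h3 : ∀ x ∉ S, 3 ≤ (cls (torus m k) S x).ncard) {y z : Fin (2 * m + 1) × Fin (2 * k + 1)}
    (hz : z ∈ S) (hy : (torus m k).dist y z = m + k) : y ∈ S := by
  by_contra hyS
  obtain ⟨z', hz', hne⟩ := hS.exists_ne z
  obtain ⟨a, ⟨-, ha⟩, b, ⟨-, hb⟩, c, ⟨-, hc⟩, hab, hac, hbc⟩ :=
    (Set.two_lt_ncard (Set.toFinite _)).1 (h3 y hyS)
  exact hne (torus_eq_of_three_antipodes ((ha z hz).symm.trans hy) ((hb z hz).symm.trans hy)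
    ((hc z hz).symm.trans hy) hab hac hbc ((ha z' hz').symm.trans (hb z' hz'))
    ((ha z' hz').symm.trans (hc z' hz'))).symm

lemma torus_eq_univ {S : Set (Fin (2 * m + 1) × Fin (2 * k + 1))} (hS : S.Nontrivial)
    (h3 : ∀ x ∉ S, 3 ≤ (cls (torus m k) S x).ncard) : S = Set.univ := by
  have hstep : ∀ x ∈ S, ∀ (a : Fin (2 * m + 1)) (b : Fin (2 * k + 1)),
      (a = m ∨ a = -m) → (b = k ∨ b = -k) → x + (a, b) ∈ S := fun x hx a b ha hb =>
    torus_mem_of_dist_eq hS h3 hx ((torus_dist_eq_iff _ _).2 (by simpa using ⟨ha, hb⟩))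
  have h₁ : ∀ x ∈ S, (x.1 - 1, x.2) ∈ S := by
    intro x hx
    convert hstep _ (hstep x hx m k (.inl rfl) (.inl rfl)) m (-k) (.inl rfl) (.inr rfl) using 1
    refine Prod.ext ?_ ?_
    · simp only [Prod.fst_add]
      linear_combination -Fin.natCast_half_add_self (m := m)
    · simp only [Prod.snd_add]
      ring
  have h₂ : ∀ x ∈ S, (x.1, x.2 - 1) ∈ S := by
    intro x hx
    convert hstep _ (hstep x hx m k (.inl rfl) (.inl rfl)) (-m) k (.inr rfl) (.inl rfl) using 1
    refine Prod.ext ?_ ?_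
    · simp only [Prod.fst_add]
      ring
    · simp only [Prod.snd_add]
      linear_combination -Fin.natCast_half_add_self (m := k)
  obtain ⟨z, hz⟩ := hS.nonempty
  refine Set.eq_univ_of_forall fun w => ?_
  have hrow : (w.1, z.2) ∈ S :=
    Fin.forall_of_imp_sub_one (P := fun a => (a, z.2) ∈ S) (fun a ha => h₁ _ ha) hz w.1
  exact Fin.forall_of_imp_sub_one (P := fun b => (w.1, b) ∈ S) (fun b hb => h₂ _ hb) hrow w.2

end Torus

theorem stmt4_general (r s : ℕ) (hro : Odd r) (hso : Odd s) :
    (¬∃ S : Set (Fin r × Fin s), IsKARS ((cycleGraph r).boxProd (cycleGraph s)) 3 S) ∧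
    adim ((cycleGraph r).boxProd (cycleGraph s)) 3 = ⊤ := by
  obtain ⟨m, rfl⟩ := hro
  obtain ⟨k, rfl⟩ := hso
  have hno : ¬∃ S, IsKARS (torus m k) 3 S := by
    rintro ⟨S, hS, ⟨w, hw⟩, h3, x, -, hcard⟩
    obtain ⟨z, rfl⟩ | hS := hS.exists_eq_singleton_or_nontrivial
    · have := even_ncard_torus_cls_singleton z x
      rw [hcard] at this
      exact absurd this (by decide)
    · exact hw (torus_eq_univ hS h3 ▸ Set.mem_univ w)
  refine ⟨hno, ?_⟩
  rw [adim, sInf_eq_top]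
  rintro _ ⟨S, hS, -⟩
  exact (hno ⟨S, hS⟩).elim

/-- For odd `r, s ≥ 3`, the torus `C_r □ C_s` has no 3-antiresolving set, i.e.
`adim_3(C_r □ C_s) = +∞`. -/
theorem stmt4 (r s : ℕ) (hr : 3 ≤ r) (hs : 3 ≤ s) (hro : Odd r) (hso : Odd s) :
    (¬∃ S : Set (Fin r × Fin s), IsKARS ((cycleGraph r).boxProd (cycleGraph s)) 3 S) ∧
    adim ((cycleGraph r).boxProd (cycleGraph s)) 3 = ⊤ :=
  stmt4_general r s hro hso
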